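/- Let p ∈ (0,1), q = 1 − p. For every dynamic environment ξ : ℕ × ℤ → {0,1}, every n ∈ ℕ, every c ∈ ℤ, and all starting points x, y ∈ ℤ with x ≤ y and y − x even, the quenched exceedance probabilities are monotone in the starting point: Σ_{m∈ℤ, m ≥ c} q_n^x(ξ, m) ≤ Σ_{m∈ℤ, m ≥ c} q_n^y(ξ, m). -/

import Mathlib

open Finset

/-- Position after `k` steps of the nearest-neighbor path started at `x`
with up/down steps given by `s`. -/
def pathPos (x : ℤ) {n : ℕ} (s : Fin n → Bool) (k : ℕ) : ℤ :=
  x + ∑ i ∈ Finset.univ.filter (fun i : Fin n => (i : ℕ) < k), (if s i then (1 : ℤ) else -1)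

/-- The quenched `n`-step transition probability `q_n^x(ξ, m)` of the random walk in the
dynamic environment `ξ : ℕ × ℤ → {0,1}` started at `x`. -/
noncomputable def quenchedProb (p : ℝ) (ξ : ℕ → ℤ → Bool) (n : ℕ) (x m : ℤ) : ℝ :=
  ∑ s ∈ Finset.univ.filter (fun s : Fin n → Bool => pathPos x s n = m),
    ∏ k : Fin n, (if ξ k (pathPos x s k) = s k then p else 1 - p)

/-!
First-step analysis. Let `E_n(x) = Σ_{m ≥ c} q_n^x(ξ, m)`. The first step goes from `x` to
`x ± 1`, so `E_{n+1}(x)` is a convex combination of `E'_n(x + 1)` and `E'_n(x - 1)`, where `E'`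
is taken in the environment shifted by one time unit. If `E'_n(z) ≤ E'_n(z + 2)` for all `z`, then
`E_{n+1}(x) ≤ E'_n(x + 1) ≤ E_{n+1}(x + 2)`: a step from `x` does no better than standing at
`x + 1`, and a step from `x + 2` no worse. So `E_n(x) ≤ E_n(x + 2)` by induction on `n`, for
all environments at once, and steps of two give the theorem.
-/

noncomputable def pathWeight (p : ℝ) (ξ : ℕ → ℤ → Bool) (x : ℤ) {n : ℕ} (s : Fin n → Bool) :
    ℝ :=
  ∏ k : Fin n, (if ξ k (pathPos x s k) = s k then p else 1 - p)

noncomputable def exceedanceProb (p : ℝ) (ξ : ℕ → ℤ → Bool) (n : ℕ) (c x : ℤ) : ℝ :=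
  ∑ s : Fin n → Bool, if c ≤ pathPos x s n then pathWeight p ξ x s else 0

lemma tsum_ite_quenchedProb_eq_exceedanceProb (p : ℝ) (ξ : ℕ → ℤ → Bool) (n : ℕ) (c x : ℤ) :
    (∑' m : ℤ, if c ≤ m then quenchedProb p ξ n x m else 0) = exceedanceProb p ξ n c x := by
  have hsplit : ∀ m : ℤ, (if c ≤ m then quenchedProb p ξ n x m else 0) =
      ∑ s : Fin n → Bool,
        if m = pathPos x s n then (if c ≤ pathPos x s n then pathWeight p ξ x s else 0) else 0 := by
    intro m
    rw [quenchedProb, Finset.sum_filter]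
    split_ifs with hc
    · refine Finset.sum_congr rfl fun s _ => ?_
      rcases eq_or_ne m (pathPos x s n) with rfl | hm
      · simp [hc, pathWeight]
      · simp [hm, hm.symm]
    · refine (Finset.sum_eq_zero fun s _ => ?_).symm
      rcases eq_or_ne m (pathPos x s n) with rfl | hm
      · simp [hc]
      · simp [hm]
  simp_rw [hsplit]
  rw [Summable.tsum_finsetSum fun s _ => (hasSum_ite_eq (pathPos x s n) _).summable]
  simp_rw [tsum_ite_eq]
  rfl

lemma pathPos_zero (x : ℤ) {n : ℕ} (s : Fin n → Bool) : pathPos x s 0 = x := by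
  simp [pathPos]

lemma pathPos_cons_succ (x : ℤ) {n : ℕ} (b : Bool) (s : Fin n → Bool) (k : ℕ) :
    pathPos x (Fin.cons b s) (k + 1) = pathPos (x + if b then 1 else -1) s k := by
  simp only [pathPos, Finset.sum_filter, Fin.sum_univ_succ, Fin.cons_zero, Fin.cons_succ,
    Fin.val_zero, Fin.val_succ, Nat.zero_lt_succ, if_true, Nat.succ_lt_succ_iff]
  ring

lemma pathWeight_cons (p : ℝ) (ξ : ℕ → ℤ → Bool) (x : ℤ) {n : ℕ} (b : Bool)
    (s : Fin n → Bool) :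
    pathWeight p ξ x (Fin.cons b s) =
      (if ξ 0 x = b then p else 1 - p) *
        pathWeight p (fun k => ξ (k + 1)) (x + if b then 1 else -1) s := by
  simp only [pathWeight, Fin.prod_univ_succ, Fin.cons_zero, Fin.cons_succ, Fin.val_zero,
    Fin.val_succ, pathPos_zero, pathPos_cons_succ]

lemma exceedanceProb_succ (p : ℝ) (ξ : ℕ → ℤ → Bool) (n : ℕ) (c x : ℤ) :
    exceedanceProb p ξ (n + 1) c x =
      (if ξ 0 x then p else 1 - p) * exceedanceProb p (fun k => ξ (k + 1)) n c (x + 1) +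
        (if ξ 0 x then 1 - p else p) * exceedanceProb p (fun k => ξ (k + 1)) n c (x - 1) := by
  rw [exceedanceProb, ← (Fin.consEquiv fun _ => Bool).sum_comp, Fintype.sum_prod_type,
    Fintype.sum_bool]
  simp only [Fin.consEquiv, Equiv.coe_fn_mk, pathPos_cons_succ, pathWeight_cons, exceedanceProb,
    Finset.mul_sum, mul_ite, mul_zero]
  cases ξ 0 x <;> simp [sub_eq_add_neg]

lemma exceedanceProb_succ_mem_uIcc (p : ℝ) (hp0 : 0 ≤ p) (hp1 : p ≤ 1) (ξ : ℕ → ℤ → Bool)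
    (n : ℕ) (c x : ℤ) :
    exceedanceProb p ξ (n + 1) c x ∈
      Set.uIcc (exceedanceProb p (fun k => ξ (k + 1)) n c (x + 1))
        (exceedanceProb p (fun k => ξ (k + 1)) n c (x - 1)) := by
  rw [exceedanceProb_succ]
  refine segment_subset_uIcc _ _
    ⟨if ξ 0 x then p else 1 - p, if ξ 0 x then 1 - p else p, ?_, ?_, ?_, rfl⟩ <;>
    split_ifs <;> linarith

lemma exceedanceProb_le_add_two (p : ℝ) (hp0 : 0 ≤ p) (hp1 : p ≤ 1) (ξ : ℕ → ℤ → Bool) (n : ℕ)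
    (c x : ℤ) : exceedanceProb p ξ n c x ≤ exceedanceProb p ξ n c (x + 2) := by
  induction n generalizing ξ x with
  | zero =>
    simp only [exceedanceProb, Finset.univ_unique, Finset.sum_singleton, pathPos_zero]
    split_ifs <;> first | rfl | omega | simp [pathWeight]
  | succ n ih =>
    set E := exceedanceProb p (fun k => ξ (k + 1)) n c
    have hE : E (x - 1) ≤ E (x + 1) ∧ E (x + 1) ≤ E (x + 3) :=
      ⟨by convert ih _ (x - 1) using 2; ring, by convert ih _ (x + 1) using 2; ring⟩
    have hx := exceedanceProb_succ_mem_uIcc p hp0 hp1 ξ n c x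
    have hx2 := exceedanceProb_succ_mem_uIcc p hp0 hp1 ξ n c (x + 2)
    rw [Set.uIcc_of_ge hE.1] at hx
    rw [show x + 2 + 1 = x + 3 by ring, show x + 2 - 1 = x + 1 by ring, Set.uIcc_of_ge hE.2] at hx2
    exact hx.2.trans hx2.1

lemma exceedanceProb_mono_of_even (p : ℝ) (hp0 : 0 ≤ p) (hp1 : p ≤ 1) (ξ : ℕ → ℤ → Bool)
    (n : ℕ) (c : ℤ) {x y : ℤ} (hxy : x ≤ y) (hpar : Even (y - x)) :
    exceedanceProb p ξ n c x ≤ exceedanceProb p ξ n c y := by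
  obtain ⟨k, hk⟩ := hpar
  lift k to ℕ using (by omega)
  have hmono : Monotone fun j : ℕ => exceedanceProb p ξ n c (x + 2 * j) :=
    monotone_nat_of_le_succ fun j => by
      simpa only [Nat.cast_succ, mul_add_one, add_assoc] using
        exceedanceProb_le_add_two p hp0 hp1 ξ n c (x + 2 * j)
  simpa [show x + 2 * (k : ℤ) = y by omega] using hmono (Nat.zero_le k)

/-- Monotonicity in the starting point: two walks in the same environment started at
ordered points of equal parity can be coupled to remain ordered, so
`Σ_{m ≥ c} q_n^x(ξ, m) ≤ Σ_{m ≥ c} q_n^y(ξ, m)` for `x ≤ y` with `y − x` even. -/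
theorem quenched_exceedance_monotone (p : ℝ) (hp0 : 0 < p) (hp1 : p < 1)
    (ξ : ℕ → ℤ → Bool) (n : ℕ) (c : ℤ) (x y : ℤ) (hxy : x ≤ y) (hpar : Even (y - x)) :
    (∑' m : ℤ, if c ≤ m then quenchedProb p ξ n x m else 0) ≤
      ∑' m : ℤ, if c ≤ m then quenchedProb p ξ n y m else 0 := by
  rw [tsum_ite_quenchedProb_eq_exceedanceProb, tsum_ite_quenchedProb_eq_exceedanceProb]
  exact exceedanceProb_mono_of_even p hp0.le hp1.le ξ n c hxy hpar
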